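/- For every admissible multi-index (k₁,…,k_d), the sequence of functions q ↦ ζ[k₁,…,k_d; n+2 : q) converges uniformly on (0,1), as n → ∞, to the tail function q ↦ ζ[k₁,…,k_d : q]_1 = Σ_{m₁ > ⋯ > m_d > 1} q^{Σ m_i(k_i-1)} / Π [m_i:q]^{k_i}. -/
import Mathlib


open Finset Filter

/-- The q-integer [m:q] = (1-q^m)/(1-q). -/
noncomputable def qint (q : ℝ) (m : ℕ) : ℝ := (1 - q ^ m) / (1 - q)

/-- Tail of the multiple q-zeta value: sum over m₁ > ⋯ > m_d > n. -/
noncomputable def qZeta {d : ℕ} (q : ℝ) (k : Fin d → ℕ) (n : ℕ) : ℝ :=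
  ∑' m : {m : Fin d → ℕ // StrictAnti m ∧ ∀ i, n < m i},
    ∏ i, q ^ (m.1 i * (k i - 1)) / (qint q (m.1 i)) ^ (k i)

/-- The modified multiple q-zeta value ζ[k₁,…,k_d; r : q). -/
noncomputable def qZetaR {d : ℕ} (q : ℝ) (k : Fin d → ℕ) (r : ℕ) : ℝ :=
  ∑' m : {m : Fin (d + 1) → ℕ // StrictAnti m ∧ ∀ i, 0 < m i},
    (∏ i : Fin d, q ^ (m.1 i.castSucc * (k i - 1)) / (qint q (m.1 i.castSucc)) ^ (k i))
      / (m.1 (Fin.last d) : ℝ) ^ r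

/-- Multiple zeta value. -/
noncomputable def mzv {d : ℕ} (k : Fin d → ℕ) : ℝ :=
  ∑' m : {m : Fin d → ℕ // StrictAnti m ∧ ∀ i, 0 < m i},
    ∏ i, (1 : ℝ) / (m.1 i : ℝ) ^ (k i)

/-- Akhilesh's double tail of a multiple zeta value. -/
noncomputable def dtail {d : ℕ} (hd : 0 < d) (k : Fin d → ℕ) (p n : ℕ) : ℝ :=
  ∑' m : {m : Fin d → ℕ // StrictAnti m ∧ ∀ i, n < m i},
    ((Nat.choose (m.1 ⟨0, hd⟩ + p) p : ℝ))⁻¹ * ∏ i, (1 : ℝ) / (m.1 i : ℝ) ^ (k i)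


lemma qint_eq_sum {q : ℝ} (hq1 : q ≠ 1) (m : ℕ) :
    qint q m = ∑ i ∈ Finset.range m, q ^ i := by
  rw [geom_sum_eq hq1, qint]
  rw [div_eq_div_iff (by intro h; apply hq1; linarith) (by intro h; apply hq1; linarith)]
  ring

lemma one_le_qint {q : ℝ} (hq0 : 0 < q) (hq1 : q < 1) {m : ℕ} (hm : 1 ≤ m) : 1 ≤ qint q m := by
  rw [qint_eq_sum hq1.ne m]
  calc (1:ℝ) = q ^ 0 := (pow_zero q).symm
  _ ≤ ∑ i ∈ Finset.range m, q ^ i :=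
    Finset.single_le_sum (f := fun i => q ^ i) (fun i _ => by positivity) (Finset.mem_range.mpr hm)

lemma qint_pos {q : ℝ} (hq0 : 0 < q) (hq1 : q < 1) {m : ℕ} (hm : 1 ≤ m) : 0 < qint q m :=
  lt_of_lt_of_le one_pos (one_le_qint hq0 hq1 hm)

lemma rpow_div_qint_le {q : ℝ} (hq0 : 0 < q) (hq1 : q < 1) {m c : ℕ} (hm : 1 ≤ m) (hc : 1 ≤ c) :
    q ^ ((m : ℝ) / c) / qint q m ≤ (c : ℝ) / m := by
  set x : ℝ := (m : ℝ) / c with hxdef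
  have hc0 : (0:ℝ) < c := by exact_mod_cast hc
  have hm0 : (0:ℝ) < m := by exact_mod_cast hm
  have hx : 0 < x := by positivity
  have hqx : 0 < q ^ x := Real.rpow_pos_of_pos hq0 x
  have hceil : ⌈x⌉₊ ≤ m := by
    apply Nat.ceil_le.mpr
    rw [hxdef]
    exact_mod_cast div_le_self hm0.le (by exact_mod_cast hc)
  have hbound : x * q ^ x ≤ qint q m := by
    rw [qint_eq_sum hq1.ne m]
    calc x * q ^ x ≤ (⌈x⌉₊ : ℝ) * q ^ x := by
          apply mul_le_mul_of_nonneg_right (Nat.le_ceil x) hqx.le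
    _ = ∑ _i ∈ Finset.range ⌈x⌉₊, q ^ x := by
          rw [Finset.sum_const, Finset.card_range, nsmul_eq_mul]
    _ ≤ ∑ i ∈ Finset.range ⌈x⌉₊, q ^ i := by
          apply Finset.sum_le_sum
          intro i hi
          rw [← Real.rpow_natCast q i]
          exact Real.rpow_le_rpow_of_exponent_ge hq0 hq1.le
            (Nat.lt_ceil.mp (Finset.mem_range.mp hi)).le
    _ ≤ ∑ i ∈ Finset.range m, q ^ i := by
          apply Finset.sum_le_sum_of_subset_of_nonneg
            (Finset.range_subset_range.mpr hceil)
          intro i _ _; positivity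
  calc q ^ x / qint q m ≤ q ^ x / (x * q ^ x) :=
        div_le_div_of_nonneg_left hqx.le (by positivity) hbound
  _ = 1 / x := by rw [mul_comm]; field_simp
  _ = (c : ℝ) / m := by rw [hxdef, one_div_div]

lemma rpow_div_qint_le' {q : ℝ} (hq0 : 0 < q) (hq1 : q < 1) {m M c : ℕ} (hm : 1 ≤ m)
    (hM : m ≤ M) (hc : 1 ≤ c) :
    q ^ ((M : ℝ) / c) / qint q m ≤ (c : ℝ) / m := by
  refine le_trans ?_ (rpow_div_qint_le hq0 hq1 hm hc)
  have h : q ^ ((M : ℝ) / c) ≤ q ^ ((m : ℝ) / c) := by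
    apply Real.rpow_le_rpow_of_exponent_ge hq0 hq1.le
    apply div_le_div_of_nonneg_right (by exact_mod_cast hM) (by positivity)
  have := qint_pos hq0 hq1 hm
  gcongr

noncomputable def wgt (d : ℕ) (x : ℕ) : ℝ := (x:ℝ) ^ (-(1 + 1/(d:ℝ)))

noncomputable def Kc (d : ℕ) : ℝ := ((d + 1 : ℕ) : ℝ) ^ (d + 1)

lemma wgt_nonneg (d x : ℕ) : 0 ≤ wgt d x := Real.rpow_nonneg (Nat.cast_nonneg x) _

lemma Kc_nonneg (d : ℕ) : 0 ≤ Kc d := by unfold Kc; positivity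

lemma core_bound {d : ℕ} (hd : 0 < d) (k : Fin d → ℕ) (hk1 : 2 ≤ k ⟨0, hd⟩)
    (hk : ∀ i, 1 ≤ k i) {q : ℝ} (hq0 : 0 < q) (hq1 : q < 1)
    (μ : Fin d → ℕ) (hμ1 : ∀ i, 1 ≤ μ i) (hμM : ∀ i, μ i ≤ μ ⟨0, hd⟩) :
    ∏ i, q ^ (μ i * (k i - 1)) / (qint q (μ i)) ^ (k i) ≤ Kc d * ∏ i, wgt d (μ i) := by
  set i₀ : Fin d := ⟨0, hd⟩ with hi₀
  set M : ℕ := μ i₀ with hMdef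
  set c : ℕ := d + 1 with hcdef
  have hM1 : 1 ≤ M := hμ1 i₀
  have hM0 : (0:ℝ) < M := by exact_mod_cast hM1
  set x : ℝ := (M : ℝ) / c with hxdef
  have hc1 : (1:ℕ) ≤ c := by omega
  have hqx0 : 0 < q ^ x := Real.rpow_pos_of_pos hq0 x
  have hqx1 : q ^ x ≤ 1 := Real.rpow_le_one hq0.le hq1.le (by positivity)
  have hqintM := qint_pos hq0 hq1 hM1
  have f_nonneg : ∀ i : Fin d, 0 ≤ q ^ (μ i * (k i - 1)) / (qint q (μ i)) ^ (k i) := by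
    intro i
    have := qint_pos hq0 hq1 (hμ1 i)
    positivity
  -- Step A
  have stepA : ∏ i, q ^ (μ i * (k i - 1)) / (qint q (μ i)) ^ (k i)
      ≤ ((q ^ x / qint q M) ^ 2 * (q ^ x) ^ (d - 1)) * ∏ i ∈ univ.erase i₀, (1 / qint q (μ i)) := by
    rw [← Finset.mul_prod_erase univ _ (Finset.mem_univ i₀)]
    apply mul_le_mul
    · -- f i₀ ≤ (q^x/[M])^2 * (q^x)^(d-1)
      have h1 : q ^ (μ i₀ * (k i₀ - 1)) ≤ q ^ M :=
        pow_le_pow_of_le_one hq0.le hq1.le (Nat.le_mul_of_pos_right M (by omega))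
      have h2 : (qint q M) ^ 2 ≤ (qint q M) ^ (k i₀) :=
        pow_le_pow_right₀ (one_le_qint hq0 hq1 hM1) hk1
      calc q ^ (μ i₀ * (k i₀ - 1)) / (qint q (μ i₀)) ^ (k i₀)
          ≤ q ^ M / (qint q M) ^ 2 := by
            rw [← hMdef]
            exact div_le_div₀ (by positivity) h1 (by positivity) h2
        _ = (q ^ x / qint q M) ^ 2 * (q ^ x) ^ (d - 1) := by
            have hx' : x * ((d + 1 : ℕ) : ℝ) = (M : ℝ) := by
              rw [hxdef, hcdef]
              exact div_mul_cancel₀ _ (by exact_mod_cast (by omega : (d+1:ℕ) ≠ 0))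
            have hqM : (q : ℝ) ^ (M : ℕ) = (q ^ x) ^ (d + 1) := by
              rw [← Real.rpow_natCast (q ^ x) (d+1), ← Real.rpow_mul hq0.le, hx',
                Real.rpow_natCast]
            rw [hqM, show d + 1 = 2 + (d - 1) by omega, pow_add, div_pow]
            ring
    · -- erase product
      apply Finset.prod_le_prod (fun i _ => f_nonneg i)
      intro i _
      have hqi := qint_pos hq0 hq1 (hμ1 i)
      exact div_le_div₀ zero_le_one (pow_le_one₀ hq0.le hq1.le)
        hqi (le_self_pow₀ (one_le_qint hq0 hq1 (hμ1 i)) (by have := hk i; omega))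
    · exact Finset.prod_nonneg (fun i _ => f_nonneg i)
    · positivity
  -- Step B : rewrite
  have cardE : (univ.erase i₀).card = d - 1 := by
    rw [Finset.card_erase_of_mem (Finset.mem_univ i₀), Finset.card_univ, Fintype.card_fin]
  have stepB : ((q ^ x / qint q M) ^ 2 * (q ^ x) ^ (d - 1)) * ∏ i ∈ univ.erase i₀, (1 / qint q (μ i))
      = (q ^ x / qint q M) ^ 2 * ∏ i ∈ univ.erase i₀, (q ^ x / qint q (μ i)) := by
    have : ∏ i ∈ univ.erase i₀, (q ^ x / qint q (μ i))
        = (∏ _i ∈ univ.erase i₀, q ^ x) * ∏ i ∈ univ.erase i₀, (1 / qint q (μ i)) := by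
      rw [← Finset.prod_mul_distrib]
      apply Finset.prod_congr rfl
      intro i _; rw [mul_one_div]
    rw [this, Finset.prod_const, cardE]; ring
  -- Step C
  have stepC : (q ^ x / qint q M) ^ 2 * ∏ i ∈ univ.erase i₀, (q ^ x / qint q (μ i))
      ≤ ((c:ℝ) / M) ^ 2 * ∏ i ∈ univ.erase i₀, ((c:ℝ) / μ i) := by
    apply mul_le_mul
    · apply pow_le_pow_left₀ (by positivity)
      exact rpow_div_qint_le' hq0 hq1 hM1 le_rfl hc1
    · apply Finset.prod_le_prod
      · intro i _; exact div_nonneg hqx0.le (qint_pos hq0 hq1 (hμ1 i)).le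
      · intro i _; exact rpow_div_qint_le' hq0 hq1 (hμ1 i) (hμM i) hc1
    · apply Finset.prod_nonneg; intro i _
      exact div_nonneg hqx0.le (qint_pos hq0 hq1 (hμ1 i)).le
    · exact pow_nonneg (div_nonneg (Nat.cast_nonneg c) (Nat.cast_nonneg M)) 2
  -- Step D
  have stepD : ((c:ℝ) / M) ^ 2 * ∏ i ∈ univ.erase i₀, ((c:ℝ) / μ i)
      = (c:ℝ) ^ (d+1) * ((1 / (M:ℝ)) * ∏ i, (1 / (μ i : ℝ))) := by
    have h1 : ∏ i, ((c:ℝ) / μ i) = ((c:ℝ) / M) * ∏ i ∈ univ.erase i₀, ((c:ℝ) / μ i) :=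
      (Finset.mul_prod_erase univ (fun i => (c:ℝ) / (μ i : ℝ)) (Finset.mem_univ i₀)).symm
    have h2 : ∏ i, ((c:ℝ) / μ i) = (c:ℝ)^d * ∏ i, (1 / (μ i : ℝ)) := by
      calc ∏ i, ((c:ℝ) / μ i) = ∏ i, ((c:ℝ) * (1 / (μ i : ℝ))) := by
            apply Finset.prod_congr rfl; intro i _; rw [mul_one_div]
      _ = (∏ _i : Fin d, (c:ℝ)) * ∏ i, (1 / (μ i : ℝ)) := Finset.prod_mul_distrib
      _ = (c:ℝ)^d * ∏ i, (1 / (μ i : ℝ)) := by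
            rw [Finset.prod_const, Finset.card_univ, Fintype.card_fin]
    calc ((c:ℝ) / M) ^ 2 * ∏ i ∈ univ.erase i₀, ((c:ℝ) / μ i)
        = ((c:ℝ) / M) * (((c:ℝ) / M) * ∏ i ∈ univ.erase i₀, ((c:ℝ) / μ i)) := by ring
      _ = ((c:ℝ) / M) * ∏ i, ((c:ℝ) / μ i) := by rw [← h1]
      _ = ((c:ℝ) / M) * ((c:ℝ)^d * ∏ i, (1 / (μ i : ℝ))) := by rw [h2]
      _ = (c:ℝ) ^ (d+1) * ((1 / (M:ℝ)) * ∏ i, (1 / (μ i : ℝ))) := by ring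
  -- Step E
  have stepE : (1 / (M:ℝ)) * ∏ i, (1 / (μ i : ℝ)) ≤ ∏ i, wgt d (μ i) := by
    have hμpos : ∀ i : Fin d, (0:ℝ) < (μ i : ℝ) := fun i => by exact_mod_cast hμ1 i
    have hw : ∀ i : Fin d, wgt d (μ i) = (1 / (μ i : ℝ)) * ((μ i : ℝ) ^ (-(1/(d:ℝ)))) := by
      intro i
      rw [wgt, neg_add, Real.rpow_add (hμpos i), Real.rpow_neg_one]; ring
    have hsplit : ∏ i, wgt d (μ i)
        = (∏ i, (1 / (μ i : ℝ))) * ∏ i, ((μ i : ℝ) ^ (-(1/(d:ℝ)))) := by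
      rw [← Finset.prod_mul_distrib]
      exact Finset.prod_congr rfl (fun i _ => hw i)
    have hkey : (1 / (M:ℝ)) ≤ ∏ i, ((μ i : ℝ) ^ (-(1/(d:ℝ)))) := by
      have heach : ∀ i : Fin d, ((M:ℝ) ^ (-(1/(d:ℝ)))) ≤ ((μ i : ℝ) ^ (-(1/(d:ℝ)))) := by
        intro i
        exact Real.rpow_le_rpow_of_nonpos (hμpos i) (by exact_mod_cast hμM i)
          (neg_nonpos.mpr (by positivity))
      have hconst : ∏ _i : Fin d, ((M:ℝ) ^ (-(1/(d:ℝ)))) = 1 / (M:ℝ) := by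
        rw [Finset.prod_const, Finset.card_univ, Fintype.card_fin,
          ← Real.rpow_natCast ((M:ℝ) ^ (-(1/(d:ℝ)))) d, ← Real.rpow_mul (Nat.cast_nonneg M)]
        have : (-(1/(d:ℝ))) * (d:ℝ) = -1 := by
          field_simp
        rw [this, Real.rpow_neg_one, one_div]
      calc (1 / (M:ℝ)) = ∏ _i : Fin d, ((M:ℝ) ^ (-(1/(d:ℝ)))) := hconst.symm
      _ ≤ ∏ i, ((μ i : ℝ) ^ (-(1/(d:ℝ)))) :=
          Finset.prod_le_prod (fun i _ => Real.rpow_nonneg (Nat.cast_nonneg M) _)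
            (fun i _ => heach i)
    rw [hsplit]
    calc (1 / (M:ℝ)) * ∏ i, (1 / (μ i : ℝ))
        = (∏ i, (1 / (μ i : ℝ))) * (1 / (M:ℝ)) := by ring
      _ ≤ (∏ i, (1 / (μ i : ℝ))) * ∏ i, ((μ i : ℝ) ^ (-(1/(d:ℝ)))) :=
          mul_le_mul_of_nonneg_left hkey (Finset.prod_nonneg (fun i _ => by positivity))
  -- combine
  calc ∏ i, q ^ (μ i * (k i - 1)) / (qint q (μ i)) ^ (k i)
      ≤ _ := stepA
    _ = _ := stepB
    _ ≤ _ := stepC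
    _ = _ := stepD
    _ ≤ (c:ℝ) ^ (d+1) * ∏ i, wgt d (μ i) :=
        mul_le_mul_of_nonneg_left stepE (by positivity)
    _ = Kc d * ∏ i, wgt d (μ i) := by rw [Kc, hcdef]

lemma one_div_pow_le_wgt {d : ℕ} (hd : 0 < d) {l : ℕ} (hl : 1 ≤ l) {s : ℕ} (hs : 2 ≤ s) :
    1 / (l:ℝ) ^ s ≤ wgt d l := by
  have hL1 : (1:ℝ) ≤ l := by exact_mod_cast hl
  have h0 : (0:ℝ) ≤ l := by positivity
  have h : (1:ℝ) / (l:ℝ) ^ s = (l:ℝ) ^ (-(s:ℝ)) := by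
    rw [Real.rpow_neg h0, Real.rpow_natCast, one_div]
  rw [h, wgt]
  apply Real.rpow_le_rpow_of_exponent_le hL1
  have hd0 : (0:ℝ) < d := by exact_mod_cast hd
  have hd1 : (1:ℝ)/(d:ℝ) ≤ 1 := by rw [div_le_one hd0]; exact_mod_cast hd
  have hs' : (2:ℝ) ≤ (s:ℝ) := by exact_mod_cast hs
  linarith

lemma term_nonneg {d : ℕ} (k : Fin d → ℕ) {q : ℝ} (hq0 : 0 < q) (hq1 : q < 1)
    {m : Fin (d+1) → ℕ} (hm0 : ∀ i, 0 < m i) {r : ℕ} :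
    0 ≤ (∏ i : Fin d, q ^ (m i.castSucc * (k i - 1)) / (qint q (m i.castSucc)) ^ (k i))
      / (m (Fin.last d) : ℝ) ^ r := by
  apply div_nonneg
  · apply Finset.prod_nonneg
    intro i _
    exact div_nonneg (by positivity) (pow_nonneg (qint_pos hq0 hq1 (hm0 _)).le _)
  · positivity

lemma mu_le {d : ℕ} (hd : 0 < d) {m : Fin (d+1) → ℕ} (hmA : StrictAnti m) (i : Fin d) :
    m i.castSucc ≤ m (Fin.castSucc ⟨0, hd⟩) := by
  apply hmA.antitone
  simp [Fin.le_def]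

lemma term_bound {d : ℕ} (hd : 0 < d) (k : Fin d → ℕ) (hk1 : 2 ≤ k ⟨0, hd⟩)
    (hk : ∀ i, 1 ≤ k i) {q : ℝ} (hq0 : 0 < q) (hq1 : q < 1)
    {m : Fin (d+1) → ℕ} (hmA : StrictAnti m) (hm0 : ∀ i, 0 < m i) {r : ℕ} (hr : 2 ≤ r) :
    (∏ i : Fin d, q ^ (m i.castSucc * (k i - 1)) / (qint q (m i.castSucc)) ^ (k i))
      / (m (Fin.last d) : ℝ) ^ r
    ≤ Kc d * ∏ j : Fin (d+1), wgt d (m j) := by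
  have hA := core_bound hd k hk1 hk hq0 hq1 (fun i => m i.castSucc)
    (fun i => hm0 _) (fun i => mu_le hd hmA i)
  have hAnn : 0 ≤ ∏ i : Fin d, q ^ (m i.castSucc * (k i - 1)) / (qint q (m i.castSucc)) ^ (k i) := by
    apply Finset.prod_nonneg
    intro i _
    exact div_nonneg (by positivity) (pow_nonneg (qint_pos hq0 hq1 (hm0 _)).le _)
  have hL : 1 / (m (Fin.last d) : ℝ) ^ r ≤ wgt d (m (Fin.last d)) :=
    one_div_pow_le_wgt hd (hm0 _) hr
  calc (∏ i : Fin d, q ^ (m i.castSucc * (k i - 1)) / (qint q (m i.castSucc)) ^ (k i))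
        / (m (Fin.last d) : ℝ) ^ r
      = (∏ i : Fin d, q ^ (m i.castSucc * (k i - 1)) / (qint q (m i.castSucc)) ^ (k i))
        * (1 / (m (Fin.last d) : ℝ) ^ r) := by rw [div_eq_mul_one_div]
    _ ≤ (Kc d * ∏ i : Fin d, wgt d (m i.castSucc)) * wgt d (m (Fin.last d)) := by
        apply mul_le_mul hA hL (by positivity)
        exact mul_nonneg (Kc_nonneg d) (Finset.prod_nonneg fun i _ => wgt_nonneg d _)
    _ = Kc d * ∏ j : Fin (d+1), wgt d (m j) := by
        rw [Fin.prod_univ_castSucc (fun j => wgt d (m j)), mul_assoc]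

lemma term_bound2 {d : ℕ} (hd : 0 < d) (k : Fin d → ℕ) (hk1 : 2 ≤ k ⟨0, hd⟩)
    (hk : ∀ i, 1 ≤ k i) {q : ℝ} (hq0 : 0 < q) (hq1 : q < 1)
    {m : Fin (d+1) → ℕ} (hmA : StrictAnti m) (hm0 : ∀ i, 0 < m i) {r : ℕ} (hr : 2 ≤ r)
    (hl : 1 < m (Fin.last d)) :
    (∏ i : Fin d, q ^ (m i.castSucc * (k i - 1)) / (qint q (m i.castSucc)) ^ (k i))
      / (m (Fin.last d) : ℝ) ^ r
    ≤ (1/2:ℝ) ^ (r - 2) * (Kc d * ∏ j : Fin (d+1), wgt d (m j)) := by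
  have hA := core_bound hd k hk1 hk hq0 hq1 (fun i => m i.castSucc)
    (fun i => hm0 _) (fun i => mu_le hd hmA i)
  have hAnn : 0 ≤ ∏ i : Fin d, q ^ (m i.castSucc * (k i - 1)) / (qint q (m i.castSucc)) ^ (k i) := by
    apply Finset.prod_nonneg
    intro i _
    exact div_nonneg (by positivity) (pow_nonneg (qint_pos hq0 hq1 (hm0 _)).le _)
  set L : ℝ := (m (Fin.last d) : ℝ) with hLdef
  have hL2 : (2:ℝ) ≤ L := by rw [hLdef]; exact_mod_cast hl
  have hL0 : (0:ℝ) < L := by linarith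
  have hLsplit : 1 / L ^ r ≤ (1/2:ℝ) ^ (r-2) * wgt d (m (Fin.last d)) := by
    have h1 : (1:ℝ) / L ^ r = (1/L) ^ (r-2) * (1/L^2) := by
      rw [div_pow, one_pow, div_mul_div_comm, one_mul, ← pow_add, Nat.sub_add_cancel hr]
    rw [h1]
    apply mul_le_mul
    · exact pow_le_pow_left₀ (by positivity) (by rw [div_le_div_iff₀ hL0 two_pos]; linarith) _
    · exact one_div_pow_le_wgt hd (hm0 _) le_rfl
    · positivity
    · positivity
  calc (∏ i : Fin d, q ^ (m i.castSucc * (k i - 1)) / (qint q (m i.castSucc)) ^ (k i)) / L ^ r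
      = (∏ i : Fin d, q ^ (m i.castSucc * (k i - 1)) / (qint q (m i.castSucc)) ^ (k i))
        * (1 / L ^ r) := by rw [div_eq_mul_one_div]
    _ ≤ (Kc d * ∏ i : Fin d, wgt d (m i.castSucc)) * ((1/2:ℝ) ^ (r-2) * wgt d (m (Fin.last d))) := by
        apply mul_le_mul hA hLsplit (by positivity)
        exact mul_nonneg (Kc_nonneg d) (Finset.prod_nonneg fun i _ => wgt_nonneg d _)
    _ = (1/2:ℝ) ^ (r - 2) * (Kc d * ∏ j : Fin (d+1), wgt d (m j)) := by
        rw [Fin.prod_univ_castSucc (fun j => wgt d (m j))]; ring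

lemma summable_wgt {d : ℕ} (hd : 0 < d) : Summable (wgt d) := by
  apply Real.summable_nat_rpow.mpr
  have hd0 : (0:ℝ) < d := by exact_mod_cast hd
  have : (0:ℝ) < 1/(d:ℝ) := by positivity
  linarith

lemma summable_pi_prod {w : ℕ → ℝ} (h0 : ∀ x, 0 ≤ w x) (hs : Summable w) (n : ℕ) :
    Summable (fun m : Fin n → ℕ => ∏ i, w (m i)) := by
  induction n with
  | zero =>
      have h : (fun m : Fin 0 → ℕ => ∏ i, w (m i)) = fun _ => 1 := by
        funext m; simp
      rw [h]
      have : Fintype (Fin 0 → ℕ) := Unique.fintype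
      exact (hasSum_fintype _).summable
  | succ n IH =>
      have h2 : Summable (fun p : ℕ × (Fin n → ℕ) => w p.1 * ∏ i, w (p.2 i)) :=
        Summable.mul_of_nonneg (f := w) (g := fun m : Fin n → ℕ => ∏ i, w (m i)) hs IH h0
          (fun m => Finset.prod_nonneg fun i _ => h0 _)
      rw [← (Fin.consEquiv (fun _ : Fin (n+1) => ℕ)).summable_iff]
      have h3 : ((fun m : Fin (n+1) → ℕ => ∏ i, w (m i)) ∘ (Fin.consEquiv (fun _ : Fin (n+1) => ℕ)))
          = fun p : ℕ × (Fin n → ℕ) => w p.1 * ∏ i, w (p.2 i) := by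
        funext p
        simp [Fin.consEquiv, Fin.prod_univ_succ]
      rw [h3]
      exact h2

-- snoc lemmas
lemma snoc_strictAnti {d : ℕ} {μ : Fin d → ℕ} (hA : StrictAnti μ) (h1 : ∀ i, 1 < μ i) :
    StrictAnti (Fin.snoc μ 1 : Fin (d+1) → ℕ) := by
  intro a b hab
  rcases Fin.exists_castSucc_eq.mpr (Fin.ne_last_of_lt hab) with ⟨a', rfl⟩
  rcases eq_or_ne b (Fin.last d) with rfl | hb
  · simp only [Fin.snoc_last, Fin.snoc_castSucc]
    exact h1 a'
  · rcases Fin.exists_castSucc_eq.mpr hb with ⟨b', rfl⟩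
    simp only [Fin.snoc_castSucc]
    exact hA (Fin.castSucc_lt_castSucc_iff.mp hab)

lemma snoc_pos {d : ℕ} {μ : Fin d → ℕ} (h1 : ∀ i, 1 < μ i) :
    ∀ i, 0 < (Fin.snoc μ 1 : Fin (d+1) → ℕ) i := by
  intro i
  rcases eq_or_ne i (Fin.last d) with rfl | hi
  · simp
  · rcases Fin.exists_castSucc_eq.mpr hi with ⟨i', rfl⟩
    simp only [Fin.snoc_castSucc]
    exact lt_trans one_pos (h1 i')

def iota (d : ℕ) : {μ : Fin d → ℕ // StrictAnti μ ∧ ∀ i, 1 < μ i} →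
    {m : Fin (d+1) → ℕ // StrictAnti m ∧ ∀ i, 0 < m i} :=
  fun μ => ⟨Fin.snoc μ.1 1, snoc_strictAnti μ.2.1 μ.2.2, snoc_pos μ.2.2⟩

lemma iota_injective (d : ℕ) : Function.Injective (iota d) := by
  intro a b h
  apply Subtype.ext
  funext i
  have := congrFun (congrArg Subtype.val h) i.castSucc
  simpa [iota, Fin.snoc_castSucc] using this

lemma mem_range_iota {d : ℕ} (x : {m : Fin (d+1) → ℕ // StrictAnti m ∧ ∀ i, 0 < m i})
    (hx : x.1 (Fin.last d) = 1) : x ∈ Set.range (iota d) := by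
  have hA : StrictAnti (fun i : Fin d => x.1 i.castSucc) := by
    intro a b hab
    exact x.2.1 (Fin.castSucc_lt_castSucc_iff.mpr hab)
  have h1 : ∀ i : Fin d, 1 < x.1 i.castSucc := by
    intro i
    have := x.2.1 (Fin.castSucc_lt_last i)
    omega
  refine ⟨⟨fun i => x.1 i.castSucc, hA, h1⟩, ?_⟩
  apply Subtype.ext
  funext j
  rcases eq_or_ne j (Fin.last d) with rfl | hj
  · simp [iota, Fin.snoc_last, hx]
  · rcases Fin.exists_castSucc_eq.mpr hj with ⟨j', rfl⟩
    simp [iota, Fin.snoc_castSucc]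

noncomputable def Cd (d : ℕ) : ℝ :=
  ∑' m : Fin (d+1) → ℕ, Kc d * ∏ j, wgt d (m j)

lemma Cd_nonneg (d : ℕ) : 0 ≤ Cd d :=
  tsum_nonneg fun m => mul_nonneg (Kc_nonneg d) (Finset.prod_nonneg fun j _ => wgt_nonneg d _)

lemma summable_G {d : ℕ} (hd : 0 < d) :
    Summable (fun m : Fin (d+1) → ℕ => Kc d * ∏ j, wgt d (m j)) :=
  (summable_pi_prod (wgt_nonneg d) (summable_wgt hd) (d+1)).mul_left (Kc d)

lemma qZetaR_split {d : ℕ} (hd : 0 < d) (k : Fin d → ℕ) (hk1 : 2 ≤ k ⟨0, hd⟩)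
    (hk : ∀ i, 1 ≤ k i) {q : ℝ} (hq0 : 0 < q) (hq1 : q < 1) (n : ℕ) :
    qZeta q k 1 ≤ qZetaR q k (n+2) ∧
      qZetaR q k (n+2) ≤ qZeta q k 1 + (1/2:ℝ)^n * Cd d := by
  classical
  set r : ℕ := n + 2 with hrdef
  have hr : 2 ≤ r := by omega
  set E := {m : Fin (d+1) → ℕ // StrictAnti m ∧ ∀ i, 0 < m i} with hE
  let F : (Fin (d+1) → ℕ) → ℝ := fun m =>
    (∏ i : Fin d, q ^ (m i.castSucc * (k i - 1)) / (qint q (m i.castSucc)) ^ (k i))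
      / (m (Fin.last d) : ℝ) ^ r
  let G : (Fin (d+1) → ℕ) → ℝ := fun m => Kc d * ∏ j, wgt d (m j)
  let f : E → ℝ := fun x => F x.1
  have hf0 : ∀ x : E, 0 ≤ f x := fun x => term_nonneg k hq0 hq1 x.2.2
  have hfle : ∀ x : E, f x ≤ G x.1 := fun x =>
    term_bound hd k hk1 hk hq0 hq1 x.2.1 x.2.2 hr
  have hG : Summable G := summable_G hd
  have hfsum : Summable f :=
    Summable.of_nonneg_of_le hf0 hfle (hG.comp_injective Subtype.val_injective)
  have hsplit := Summable.tsum_add_tsum_compl (f := f) (s := Set.range (iota d))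
    (hfsum.subtype _) (hfsum.subtype _)
  have hqZetaR : qZetaR q k r = ∑' x : E, f x := rfl
  -- first part equals qZeta q k 1
  have h1 : ∑' x : (Set.range (iota d)), f x = qZeta q k 1 := by
    rw [qZeta]
    calc ∑' x : (Set.range (iota d)), f x
        = ∑' μ : {μ : Fin d → ℕ // StrictAnti μ ∧ ∀ i, 1 < μ i},
            f (Equiv.ofInjective (iota d) (iota_injective d) μ) :=
          ((Equiv.ofInjective (iota d) (iota_injective d)).tsum_eq
            (fun x : (Set.range (iota d)) => f x)).symm
      _ = ∑' μ : {μ : Fin d → ℕ // StrictAnti μ ∧ ∀ i, 1 < μ i},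
            ∏ i, q ^ (μ.1 i * (k i - 1)) / (qint q (μ.1 i)) ^ (k i) := by
          apply tsum_congr
          intro μ
          show F (iota d μ).1 = _
          simp only [iota, F, Fin.snoc_castSucc, Fin.snoc_last]
          norm_num
  -- second part bounds
  have h2 : 0 ≤ ∑' x : ↥(Set.range (iota d))ᶜ, f x :=
    tsum_nonneg fun x => hf0 _
  have h3 : ∑' x : ↥(Set.range (iota d))ᶜ, f x ≤ (1/2:ℝ)^n * Cd d := by
    have hCd : (1/2:ℝ)^n * Cd d = ∑' m : Fin (d+1) → ℕ, (1/2:ℝ)^n * G m := by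
      simp only [G, Cd, tsum_mul_left]
    rw [hCd]
    apply Summable.tsum_le_tsum_of_inj (fun x : ↥(Set.range (iota d))ᶜ => (x.1.1 : Fin (d+1) → ℕ))
    · intro a b hab
      exact Subtype.ext (Subtype.ext hab)
    · intro c _
      exact mul_nonneg (by positivity)
        (mul_nonneg (Kc_nonneg d) (Finset.prod_nonneg fun j _ => wgt_nonneg d _))
    · intro x
      have hlast : 1 < x.1.1 (Fin.last d) := by
        rcases Nat.lt_or_ge 1 (x.1.1 (Fin.last d)) with h | h
        · exact h
        · exfalso
          apply x.2
          apply mem_range_iota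
          have := x.1.2.2 (Fin.last d)
          omega
      have hh := term_bound2 hd k hk1 hk hq0 hq1 x.1.2.1 x.1.2.2 hr hlast
      have hrn : r - 2 = n := by omega
      rw [hrn] at hh
      exact hh
    · exact hfsum.subtype _
    · exact hG.mul_left _
  constructor
  · rw [hqZetaR, ← hsplit, ← h1]; linarith
  · rw [hqZetaR, ← hsplit, ← h1]; linarith


theorem stmt19 (d : ℕ) (hd : 0 < d) (k : Fin d → ℕ) (hk1 : 2 ≤ k ⟨0, hd⟩)
    (hk : ∀ i, 1 ≤ k i) :
    TendstoUniformlyOn (fun (n : ℕ) (q : ℝ) => qZetaR q k (n + 2))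
      (fun q : ℝ => qZeta q k 1) atTop (Set.Ioo (0:ℝ) 1) := by
  rw [Metric.tendstoUniformlyOn_iff]
  intro ε hε
  have htend : Tendsto (fun n : ℕ => (1/2:ℝ)^n * Cd d) atTop (nhds 0) := by
    have h := (tendsto_pow_atTop_nhds_zero_of_lt_one (by norm_num : (0:ℝ) ≤ 1/2)
      (by norm_num : (1/2:ℝ) < 1)).mul_const (Cd d)
    simpa using h
  filter_upwards [htend.eventually (gt_mem_nhds hε)] with n hn
  intro q hq
  obtain ⟨ha, hb⟩ := qZetaR_split hd k hk1 hk hq.1 hq.2 n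
  rw [Real.dist_eq, abs_sub_comm, abs_of_nonneg (by linarith)]
  linarith
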